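/- (Theorem 1 of the paper, claim (11).) For all integers s ≥ 1 and u with 0 ≤ u ≤ pow_s, every coefficient of the high part χ(s,u)_H := Σ_{i > ts+u(k−1)} coeff(χ(s,u), X^i)·X^i belongs to the subspace I_{s+1}; that is, for every degree i > ts + u(k−1), the coefficient of X^i in χ(s,u) lies in I_{s+1}. -/

import Mathlib

open Polynomial

noncomputable def Lam (F : Type*) [CommRing F] (t k : ℕ) :
    Polynomial (MvPolynomial (Fin t ⊕ Fin k) F) :=
  X ^ t + ∑ j : Fin t, C (MvPolynomial.X (Sum.inl j)) * X ^ (j : ℕ)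

noncomputable def Pp (F : Type*) [CommRing F] (t k : ℕ) :
    Polynomial (MvPolynomial (Fin t ⊕ Fin k) F) :=
  ∑ i : Fin k, C (MvPolynomial.X (Sum.inr i)) * X ^ (i : ℕ)

noncomputable def liftP (F : Type*) [CommRing F] (t k : ℕ) (f : Polynomial F) :
    Polynomial (MvPolynomial (Fin t ⊕ Fin k) F) :=
  f.map MvPolynomial.C

/-- `Ω`, the negated quotient in the division of `Λ·R` by the monic polynomial `G`. -/
noncomputable def Om (F : Type*) [Field F] (t k : ℕ) (R G : Polynomial F) :
    Polynomial (MvPolynomial (Fin t ⊕ Fin k) F) :=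
  -((Lam F t k * liftP F t k R) /ₘ liftP F t k G)

/-- `χ(s,u) := Λ^{s−u}·(Λ·R + Ω·G)^u` if `u < s`, and
`χ(s,u) := (Σ_{i=0}^{s−1} binom(u,i) Λ^{s−i} R^{u−i} Ω^i G^i) mod G^s` if `u ≥ s`. -/
noncomputable def chi (F : Type*) [Field F] (t k : ℕ) (R G : Polynomial F) (s u : ℕ) :
    Polynomial (MvPolynomial (Fin t ⊕ Fin k) F) :=
  if u < s then
    Lam F t k ^ (s - u) * (Lam F t k * liftP F t k R + Om F t k R G * liftP F t k G) ^ u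
  else
    (∑ i ∈ Finset.range s, u.choose i •
      (Lam F t k ^ (s - i) * liftP F t k R ^ (u - i) * Om F t k R G ^ i * liftP F t k G ^ i))
      %ₘ liftP F t k G ^ s

/-- `ID F t k R G D` is the smallest `F`-linear subspace of
`A = F[λ₀,…,λ_{t−1},p₀,…,p_{k−1}]` containing all coefficients of
`Λ·P − (Λ·R mod G)` and closed under multiplication by any monomial `m`
whenever the total degree of the product is at most `D`. -/
noncomputable def ID (F : Type*) [Field F] (t k : ℕ) (R G : Polynomial F) (D : ℕ) :
    Submodule F (MvPolynomial (Fin t ⊕ Fin k) F) :=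
  sInf {W : Submodule F (MvPolynomial (Fin t ⊕ Fin k) F) |
    (Set.range (Lam F t k * Pp F t k - (Lam F t k * liftP F t k R) %ₘ liftP F t k G).coeff) ⊆ W ∧
    ∀ f ∈ W, ∀ d : (Fin t ⊕ Fin k) →₀ ℕ,
      ((MvPolynomial.monomial d (1 : F)) * f).totalDegree ≤ D →
      (MvPolynomial.monomial d (1 : F)) * f ∈ W}

/-!
Let `M := Λ·R mod G = Λ·R + Ω·G` and `K := Λ·P − M`, the polynomial whose coefficients generate
`I_D`, and `ψ(s,u) := Σ_{i<s} binom(u,i) Λ^{s-1-i} R^{u-i} (ΩG)^i`. Then `χ(s,u) = Λ·ψ(s,u) mod G^s`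
(for `u < s` by the binomial theorem and a degree count), and Pascal's rule gives
`M·ψ(s,u) ≡ Λ·ψ(s,u+1) mod G^s`; as `M = Λ·P − K`, this yields
`χ(s,u+1) = (P·χ(s,u) − K·ψ(s,u)) mod G^s`.

Induct on `u`. Splitting `χ(s,u)` into its part of degree `≤ ts + u(k−1)` and the rest, the first
part times `P` has degree `< sn`, so reduction leaves it alone and it contributes nothing above
`ts + (u+1)(k−1)`. The coefficients of the rest lie in `I_{s+1}` and have total degree `≤ s` in the
`λ, p`, while `P`, `K` and `ψ(s,u)` have coefficients of total degree `1`, `≤ 2` and `≤ s − 1`; so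
every coefficient of `P·(rest) − K·ψ(s,u)` lies in `I_{s+1}`, and reduction modulo `G^s ∈ F[X]`
keeps it there.
-/

namespace Polynomial

variable {R A : Type*} [CommRing R] [CommRing A] [Algebra R A] {V W : Submodule R A}

variable (V) in
def coeffsIn : Submodule R A[X] where
  carrier := {p | ∀ i, p.coeff i ∈ V}
  add_mem' hp hq i := by rw [coeff_add]; exact V.add_mem (hp i) (hq i)
  zero_mem' i := by rw [coeff_zero]; exact V.zero_mem
  smul_mem' c _ hp i := by rw [coeff_smul]; exact V.smul_mem c (hp i)

lemma coeffsIn_mono (h : V ≤ W) : coeffsIn V ≤ coeffsIn W := fun _ hp i => h (hp i)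

lemma C_mul_X_pow_mem_coeffsIn {c : A} (hc : c ∈ V) (n : ℕ) : C c * X ^ n ∈ coeffsIn V := by
  intro i
  rw [coeff_C_mul_X_pow]
  split_ifs
  exacts [hc, V.zero_mem]

lemma mul_mem_coeffsIn_mul {p q : A[X]} (hp : p ∈ coeffsIn V) (hq : q ∈ coeffsIn W) :
    p * q ∈ coeffsIn (V * W) := fun i => by
  rw [coeff_mul]
  exact Submodule.sum_mem _ fun x _ => Submodule.mul_mem_mul (hp x.1) (hq x.2)

lemma X_pow_mem_coeffsIn (h : (1 : A) ∈ V) (n : ℕ) : (X ^ n : A[X]) ∈ coeffsIn V := by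
  simpa only [C_1, one_mul] using C_mul_X_pow_mem_coeffsIn h n

lemma one_mem_coeffsIn_one : (1 : A[X]) ∈ coeffsIn (1 : Submodule R A) := by
  simpa only [pow_zero] using X_pow_mem_coeffsIn (V := 1) (Submodule.one_le.mp le_rfl) 0

lemma pow_mem_coeffsIn_pow {p : A[X]} (hp : p ∈ coeffsIn V) (m : ℕ) :
    p ^ m ∈ coeffsIn (V ^ m) := by
  induction m with
  | zero => simpa using one_mem_coeffsIn_one
  | succ m ih => simpa [pow_succ] using mul_mem_coeffsIn_mul ih hp

lemma smul_map_mem_coeffsIn {c : A} (hc : c ∈ V) (f : R[X]) :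
    c • f.map (algebraMap R A) ∈ coeffsIn V := fun i => by
  rw [coeff_smul, coeff_map, smul_eq_mul, ← Algebra.commutes, ← Algebra.smul_def]
  exact V.smul_mem _ hc

lemma modByMonic_map_mem_coeffsIn {B : R[X]} (hB : B.Monic) {p : A[X]} (hp : p ∈ coeffsIn V) :
    p %ₘ B.map (algebraMap R A) ∈ coeffsIn V := by
  have hX : ∀ i, (X ^ i : A[X]) %ₘ B.map (algebraMap R A)
      = ((X ^ i : R[X]) %ₘ B).map (algebraMap R A) := fun i => by
    rw [map_modByMonic _ hB, Polynomial.map_pow, map_X]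
  rw [p.as_sum_range_C_mul_X_pow]
  simp only [← smul_eq_C_mul]
  rw [← modByMonicHom_apply, map_sum]
  refine Submodule.sum_mem _ fun i _ => ?_
  rw [map_smul, modByMonicHom_apply, hX]
  exact smul_map_mem_coeffsIn (hp i) _

lemma exists_eq_add_natDegree_le_of_coeff_mem {p : A[X]} {θ : ℕ}
    (h : ∀ i, θ < i → p.coeff i ∈ V) :
    ∃ lo hi : A[X], p = lo + hi ∧ lo.natDegree ≤ θ ∧ hi ∈ coeffsIn V := by
  set lo := ∑ j ∈ Finset.range (θ + 1), C (p.coeff j) * X ^ j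
  refine ⟨lo, p - lo, by ring, natDegree_sum_le_of_forall_le _ _ fun j hj =>
    (natDegree_C_mul_X_pow_le _ _).trans (Nat.lt_succ_iff.mp (Finset.mem_range.mp hj)), fun i => ?_⟩
  rcases le_or_gt i θ with hi | hi
  · simp [lo, Nat.lt_succ_of_le hi]
  · simpa [lo, coeff_C_mul_X_pow, hi.not_ge, Nat.lt_succ_iff] using h i hi

end Polynomial

namespace MvPolynomial

variable {σ R : Type*} [CommRing R]

lemma restrictTotalDegree_mono {a b : ℕ} (h : a ≤ b) :
    restrictTotalDegree σ R a ≤ restrictTotalDegree σ R b := fun p hp => by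
  rw [mem_restrictTotalDegree] at hp ⊢
  exact hp.trans h

lemma restrictTotalDegree_mul_le (a b : ℕ) :
    restrictTotalDegree σ R a * restrictTotalDegree σ R b ≤ restrictTotalDegree σ R (a + b) :=
  Submodule.mul_le.mpr fun p hp q hq => by
    rw [mem_restrictTotalDegree] at hp hq ⊢
    exact (totalDegree_mul p q).trans (add_le_add hp hq)

lemma restrictTotalDegree_pow_le (a m : ℕ) :
    restrictTotalDegree σ R a ^ m ≤ restrictTotalDegree σ R (m * a) := by
  induction m with
  | zero => simp [Submodule.one_le, mem_restrictTotalDegree]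
  | succ m ih =>
    rw [pow_succ, Nat.succ_mul]
    exact (mul_le_mul' ih le_rfl).trans (restrictTotalDegree_mul_le _ _)

lemma X_mem_restrictTotalDegree_one [Nontrivial R] (i : σ) : X i ∈ restrictTotalDegree σ R 1 := by
  rw [mem_restrictTotalDegree, totalDegree_X]

end MvPolynomial

section TruncBinomial

open Finset

variable {S : Type*} [CommSemiring S] (L x y : S)

def truncBinomial (s u : ℕ) : S :=
  ∑ i ∈ range s, u.choose i • (L ^ (s - 1 - i) * x ^ (u - i) * y ^ i)

lemma mul_truncBinomial_eq_sum (z g : S) (s u : ℕ) :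
    L * truncBinomial L x (z * g) s u
      = ∑ i ∈ range s, u.choose i • (L ^ (s - i) * x ^ (u - i) * z ^ i * g ^ i) := by
  rw [truncBinomial, mul_sum]
  refine sum_congr rfl fun i hi => ?_
  rw [mem_range] at hi
  rw [mul_smul_comm, show s - i = s - 1 - i + 1 by omega, pow_succ, mul_pow]
  ring

lemma mul_truncBinomial_of_lt {s u : ℕ} (h : u < s) :
    L * truncBinomial L x y s u = L ^ (s - u) * (L * x + y) ^ u := by
  obtain ⟨d, rfl⟩ := Nat.exists_eq_add_of_lt h
  rw [add_comm (L * x), add_pow, mul_sum, truncBinomial, mul_sum,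
    ← sum_subset (range_subset_range.mpr h.nat_succ_le)]
  · refine sum_congr rfl fun i hi => ?_
    rw [mem_range] at hi
    rw [mul_smul_comm, nsmul_eq_mul, mul_pow, show u + d + 1 - 1 - i = d + (u - i) by omega,
      show u + d + 1 - u = d + 1 by omega]
    ring
  · intro i _ hi
    rw [mem_range, not_lt] at hi
    rw [Nat.choose_eq_zero_of_lt hi, zero_smul, mul_zero]

/-- Pascal's rule for the truncated expansion; the last term is what falls off at index `s`. -/
lemma add_mul_truncBinomial {s : ℕ} (hs : 1 ≤ s) (u : ℕ) :
    (L * x + y) * truncBinomial L x y s u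
      = L * truncBinomial L x y s (u + 1) + u.choose (s - 1) • (x ^ (u + 1 - s) * y ^ s) := by
  obtain ⟨s, rfl⟩ := Nat.exists_eq_add_of_le' hs
  set f : ℕ → S := fun i => L ^ (s + 1 - i) * x ^ (u + 1 - i) * y ^ i with hf
  have hLx : L * x * truncBinomial L x y (s + 1) u = ∑ i ∈ range (s + 1), u.choose i • f i := by
    rw [truncBinomial, mul_sum]
    refine sum_congr rfl fun i hi => ?_
    rw [mem_range] at hi
    rcases le_or_gt i u with hiu | hiu
    · simp only [hf]
      rw [mul_smul_comm, show s + 1 - i = s + 1 - 1 - i + 1 by omega,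
        show u + 1 - i = u - i + 1 by omega]
      ring
    · rw [Nat.choose_eq_zero_of_lt hiu, zero_smul, zero_smul, mul_zero]
  have hy : y * truncBinomial L x y (s + 1) u = ∑ i ∈ range (s + 1), u.choose i • f (i + 1) := by
    rw [truncBinomial, mul_sum]
    refine sum_congr rfl fun i _ => ?_
    simp only [hf]
    rw [mul_smul_comm, show s + 1 - 1 - i = s - i by omega, show u + 1 - (i + 1) = u - i by omega,
      show s + 1 - (i + 1) = s - i by omega]
    ring
  have hL : L * truncBinomial L x y (s + 1) (u + 1)
      = ∑ i ∈ range (s + 1), (u + 1).choose i • f i := by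
    rw [truncBinomial, mul_sum]
    refine sum_congr rfl fun i hi => ?_
    rw [mem_range] at hi
    simp only [hf]
    rw [mul_smul_comm, show s + 1 - i = s + 1 - 1 - i + 1 by omega, pow_succ]
    ring
  have pascal : ∑ i ∈ range (s + 1), (u + 1).choose i • f i
      = ∑ i ∈ range (s + 1), u.choose i • f i + ∑ i ∈ range s, u.choose i • f (i + 1) := by
    simp only [sum_range_succ' _ s, Nat.choose_succ_succ', add_smul, sum_add_distrib,
      Nat.choose_zero_right]
    abel
  rw [add_mul, hLx, hy, hL, pascal, sum_range_succ (fun i => u.choose i • f (i + 1)) s,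
    Nat.add_sub_cancel, hf]
  simp only [Nat.sub_self, pow_zero, one_mul]
  abel

end TruncBinomial

namespace Polynomial

variable {σ R : Type*} [CommRing R]

open MvPolynomial (restrictTotalDegree restrictTotalDegree_mono)

lemma mul_mem_coeffsIn_restrictTotalDegree {a b c : ℕ} {p q : (MvPolynomial σ R)[X]}
    (hp : p ∈ coeffsIn (restrictTotalDegree σ R a))
    (hq : q ∈ coeffsIn (restrictTotalDegree σ R b)) (h : a + b ≤ c) :
    p * q ∈ coeffsIn (restrictTotalDegree σ R c) :=
  coeffsIn_mono ((MvPolynomial.restrictTotalDegree_mul_le a b).trans (restrictTotalDegree_mono h))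
    (mul_mem_coeffsIn_mul hp hq)

lemma pow_mem_coeffsIn_restrictTotalDegree {a c : ℕ} {p : (MvPolynomial σ R)[X]}
    (hp : p ∈ coeffsIn (restrictTotalDegree σ R a)) (m : ℕ) (h : m * a ≤ c) :
    p ^ m ∈ coeffsIn (restrictTotalDegree σ R c) :=
  coeffsIn_mono ((MvPolynomial.restrictTotalDegree_pow_le a m).trans (restrictTotalDegree_mono h))
    (pow_mem_coeffsIn_pow hp m)

lemma truncBinomial_mem_coeffsIn {L x y : (MvPolynomial σ R)[X]}
    (hL : L ∈ coeffsIn (restrictTotalDegree σ R 1)) (hx : x ∈ coeffsIn (restrictTotalDegree σ R 0))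
    (hy : y ∈ coeffsIn (restrictTotalDegree σ R 1)) (s u : ℕ) :
    truncBinomial L x y s u ∈ coeffsIn (restrictTotalDegree σ R (s - 1)) := by
  refine Submodule.sum_mem _ fun i hi => nsmul_mem ?_ _
  rw [Finset.mem_range] at hi
  exact mul_mem_coeffsIn_restrictTotalDegree
    (mul_mem_coeffsIn_restrictTotalDegree (pow_mem_coeffsIn_restrictTotalDegree hL _ le_rfl)
      (pow_mem_coeffsIn_restrictTotalDegree hx _ le_rfl) le_rfl)
    (pow_mem_coeffsIn_restrictTotalDegree hy i le_rfl) (by omega)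

end Polynomial

section KeyEquation

open MvPolynomial (restrictTotalDegree mem_restrictTotalDegree restrictTotalDegree_mono
  X_mem_restrictTotalDegree_one)

variable {F : Type*} [Field F] {t k : ℕ} {R G : F[X]}

noncomputable def keyPoly (F : Type*) [Field F] (t k : ℕ) (R G : F[X]) :
    (MvPolynomial (Fin t ⊕ Fin k) F)[X] :=
  Lam F t k * Pp F t k - (Lam F t k * liftP F t k R) %ₘ liftP F t k G

noncomputable def truncChi (F : Type*) [Field F] (t k : ℕ) (R G : F[X]) (s u : ℕ) :
    (MvPolynomial (Fin t ⊕ Fin k) F)[X] :=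
  truncBinomial (Lam F t k) (liftP F t k R) (Om F t k R G * liftP F t k G) s u

noncomputable def reducedChi (F : Type*) [Field F] (t k : ℕ) (R G : F[X]) (s u : ℕ) :
    (MvPolynomial (Fin t ⊕ Fin k) F)[X] :=
  (Lam F t k * truncChi F t k R G s u) %ₘ liftP F t k G ^ s

lemma liftP_eq_map (f : F[X]) : liftP F t k f = f.map (algebraMap F _) := by
  rw [liftP, MvPolynomial.algebraMap_eq]

lemma natDegree_lam_le : (Lam F t k).natDegree ≤ t := by
  refine natDegree_add_le_of_degree_le (natDegree_X_pow_le t) ?_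
  refine natDegree_sum_le_of_forall_le _ _ fun j _ => (natDegree_C_mul_X_pow_le _ _).trans ?_
  omega

lemma natDegree_pp_le : (Pp F t k).natDegree ≤ k - 1 :=
  natDegree_sum_le_of_forall_le _ _ fun i _ => (natDegree_C_mul_X_pow_le _ _).trans (by omega)

lemma lam_mem_coeffsIn : Lam F t k ∈ coeffsIn (restrictTotalDegree _ F 1) := by
  refine Submodule.add_mem _ ?_
    (Submodule.sum_mem _ fun _ _ => C_mul_X_pow_mem_coeffsIn (X_mem_restrictTotalDegree_one _) _)
  exact X_pow_mem_coeffsIn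
    (by rw [mem_restrictTotalDegree, MvPolynomial.totalDegree_one]; exact zero_le_one) t

lemma pp_mem_coeffsIn : Pp F t k ∈ coeffsIn (restrictTotalDegree _ F 1) :=
  Submodule.sum_mem _ fun _ _ => C_mul_X_pow_mem_coeffsIn (X_mem_restrictTotalDegree_one _) _

lemma liftP_mem_coeffsIn (f : F[X]) : liftP F t k f ∈ coeffsIn (restrictTotalDegree _ F 0) :=
  fun i => by rw [liftP, coeff_map, mem_restrictTotalDegree, MvPolynomial.totalDegree_C]

lemma om_mul_liftP :
    Om F t k R G * liftP F t k G
      = (Lam F t k * liftP F t k R) %ₘ liftP F t k G - Lam F t k * liftP F t k R := by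
  rw [Om]
  linear_combination -modByMonic_add_div (Lam F t k * liftP F t k R) (liftP F t k G)

lemma lam_mul_liftP_mem_coeffsIn :
    Lam F t k * liftP F t k R ∈ coeffsIn (restrictTotalDegree _ F 1) :=
  mul_mem_coeffsIn_restrictTotalDegree lam_mem_coeffsIn (liftP_mem_coeffsIn R) le_rfl

lemma lam_mul_liftP_modByMonic_mem_coeffsIn (hG : G.Monic) :
    (Lam F t k * liftP F t k R) %ₘ liftP F t k G ∈ coeffsIn (restrictTotalDegree _ F 1) := by
  rw [liftP_eq_map G]
  exact modByMonic_map_mem_coeffsIn hG lam_mul_liftP_mem_coeffsIn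

lemma om_mul_liftP_mem_coeffsIn (hG : G.Monic) :
    Om F t k R G * liftP F t k G ∈ coeffsIn (restrictTotalDegree _ F 1) := by
  rw [om_mul_liftP]
  exact sub_mem (lam_mul_liftP_modByMonic_mem_coeffsIn hG) lam_mul_liftP_mem_coeffsIn

lemma keyPoly_mem_coeffsIn (hG : G.Monic) :
    keyPoly F t k R G ∈ coeffsIn (restrictTotalDegree _ F 2) :=
  sub_mem (mul_mem_coeffsIn_restrictTotalDegree lam_mem_coeffsIn pp_mem_coeffsIn le_rfl)
    (coeffsIn_mono (restrictTotalDegree_mono one_le_two) (lam_mul_liftP_modByMonic_mem_coeffsIn hG))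

lemma truncChi_mem_coeffsIn (hG : G.Monic) (s u : ℕ) :
    truncChi F t k R G s u ∈ coeffsIn (restrictTotalDegree _ F (s - 1)) :=
  truncBinomial_mem_coeffsIn lam_mem_coeffsIn (liftP_mem_coeffsIn R) (om_mul_liftP_mem_coeffsIn hG)
    s u

lemma reducedChi_mem_coeffsIn (hG : G.Monic) {s : ℕ} (hs : 1 ≤ s) (u : ℕ) :
    reducedChi F t k R G s u ∈ coeffsIn (restrictTotalDegree _ F s) := by
  rw [reducedChi, liftP_eq_map, ← Polynomial.map_pow]
  exact modByMonic_map_mem_coeffsIn (hG.pow s) (mul_mem_coeffsIn_restrictTotalDegree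
    lam_mem_coeffsIn (truncChi_mem_coeffsIn hG s u) (by omega))

lemma keyPoly_mem_coeffsIn_ID (D : ℕ) : keyPoly F t k R G ∈ coeffsIn (ID F t k R G D) :=
  fun i => Submodule.mem_sInf.2 fun _ hW => hW.1 ⟨i, rfl⟩

lemma monomial_mul_mem_ID {D : ℕ} {f : MvPolynomial (Fin t ⊕ Fin k) F} (hf : f ∈ ID F t k R G D)
    (d : Fin t ⊕ Fin k →₀ ℕ) (h : (MvPolynomial.monomial d 1 * f).totalDegree ≤ D) :
    MvPolynomial.monomial d 1 * f ∈ ID F t k R G D :=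
  Submodule.mem_sInf.2 fun W hW => hW.2 f (Submodule.mem_sInf.1 hf W hW) d h

lemma restrictTotalDegree_mul_inf_ID_le {a b D : ℕ} (h : a + b ≤ D) :
    restrictTotalDegree _ F a * (ID F t k R G D ⊓ restrictTotalDegree _ F b) ≤ ID F t k R G D := by
  refine Submodule.mul_le.mpr fun y hy f hf => ?_
  rw [mem_restrictTotalDegree] at hy
  obtain ⟨hfI, hfdeg⟩ := hf
  rw [SetLike.mem_coe, mem_restrictTotalDegree] at hfdeg
  rw [y.as_sum, Finset.sum_mul]
  refine Submodule.sum_mem _ fun d hd => ?_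
  rw [← mul_one (y.coeff d), ← MvPolynomial.C_mul_monomial, mul_assoc, ← MvPolynomial.smul_eq_C_mul]
  refine Submodule.smul_mem _ _ (monomial_mul_mem_ID hfI d ?_)
  calc _ ≤ (MvPolynomial.monomial d (1 : F)).totalDegree + f.totalDegree :=
        MvPolynomial.totalDegree_mul _ _
    _ ≤ a + b := add_le_add ((MvPolynomial.totalDegree_monomial_le d 1).trans
        ((MvPolynomial.le_totalDegree hd).trans hy)) hfdeg
    _ ≤ D := h

lemma modByMonic_liftP_pow_of_natDegree_lt (hG : G.Monic) {s : ℕ}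
    {p : (MvPolynomial (Fin t ⊕ Fin k) F)[X]} (hp : p.natDegree < s * G.natDegree) :
    p %ₘ liftP F t k G ^ s = p := by
  have hGs : (liftP F t k G ^ s).Monic := (hG.map _).pow s
  rw [modByMonic_eq_self_iff hGs]
  refine degree_lt_degree ?_
  rwa [liftP, (hG.map _).natDegree_pow, hG.natDegree_map]

lemma natDegree_lam_mul_liftP_modByMonic_lt (hG : G.Monic) (hG0 : 0 < G.natDegree) :
    ((Lam F t k * liftP F t k R) %ₘ liftP F t k G).natDegree < G.natDegree := by
  have hdeg : (liftP F t k G).natDegree = G.natDegree := hG.natDegree_map _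
  rw [← hdeg]
  refine natDegree_modByMonic_lt _ (hG.map _) fun h => ?_
  rw [h, natDegree_one] at hdeg
  omega

lemma chi_eq_reducedChi (hG : G.Monic) (htG : t < G.natDegree) (s u : ℕ) :
    chi F t k R G s u = reducedChi F t k R G s u := by
  rw [chi, reducedChi, truncChi]
  split_ifs with hus
  · rw [mul_truncBinomial_of_lt _ _ _ hus, om_mul_liftP, add_sub_cancel,
      modByMonic_liftP_pow_of_natDegree_lt hG]
    have hM := natDegree_lam_mul_liftP_modByMonic_lt (t := t) (k := k) (R := R) hG (by omega)
    refine natDegree_mul_le.trans_lt ((add_le_add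
      (natDegree_pow_le_of_le (s - u) natDegree_lam_le)
      (natDegree_pow_le_of_le u (Nat.le_sub_one_of_lt hM))).trans_lt ?_)
    obtain ⟨d, rfl⟩ := Nat.exists_eq_add_of_lt hus
    obtain ⟨m, hm⟩ := Nat.exists_eq_add_of_lt htG
    rw [hm, show u + d + 1 - u = d + 1 by omega, show t + m + 1 - 1 = t + m by omega]
    nlinarith
  · rw [mul_truncBinomial_eq_sum]

lemma reducedChi_succ (hG : G.Monic) {s : ℕ} (hs : 1 ≤ s) (u : ℕ) :
    reducedChi F t k R G s (u + 1)
      = (Pp F t k * reducedChi F t k R G s u - keyPoly F t k R G * truncChi F t k R G s u)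
          %ₘ liftP F t k G ^ s := by
  have hGs : (liftP F t k G ^ s).Monic := (hG.map _).pow s
  obtain ⟨a, ha⟩ := dvd_modByMonic_sub (Lam F t k * truncChi F t k R G s u) (liftP F t k G ^ s)
  have hstep := add_mul_truncBinomial (Lam F t k) (liftP F t k R) (Om F t k R G * liftP F t k G)
    hs u
  rw [nsmul_eq_mul] at hstep
  rw [reducedChi, reducedChi]
  unfold truncChi at *
  refine modByMonic_eq_of_dvd_sub hGs ⟨-(Pp F t k * a) - (u.choose (s - 1) : _) *
    (liftP F t k R ^ (u + 1 - s) * Om F t k R G ^ s), ?_⟩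
  rw [keyPoly]
  linear_combination -(Pp F t k * ha) - hstep
    + truncBinomial (Lam F t k) (liftP F t k R) (Om F t k R G * liftP F t k G) s u
      * om_mul_liftP (t := t) (k := k) (R := R) (G := G)

lemma coeff_reducedChi_mem_ID (hG : G.Monic) {s : ℕ} (hs : 1 ≤ s) (u : ℕ)
    (hu : s * t + u * (k - 1) < s * G.natDegree) {i : ℕ} (hi : s * t + u * (k - 1) < i) :
    (reducedChi F t k R G s u).coeff i ∈ ID F t k R G (s + 1) := by
  induction u generalizing i with
  | zero =>
    have hdeg := natDegree_pow_le_of_le s (natDegree_lam_le (F := F) (t := t) (k := k))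
    rw [zero_mul, add_zero] at hu hi
    rw [reducedChi, truncChi, mul_truncBinomial_of_lt _ _ _ hs, pow_zero, mul_one, Nat.sub_zero,
      modByMonic_liftP_pow_of_natDegree_lt hG (by omega), coeff_eq_zero_of_natDegree_lt (by omega)]
    exact zero_mem _
  | succ u ih =>
    rw [add_one_mul, ← add_assoc] at hu hi
    obtain ⟨lo, high, hsplit, hlo, hhigh⟩ := exists_eq_add_natDegree_le_of_coeff_mem
      (V := ID F t k R G (s + 1) ⊓ restrictTotalDegree _ F s) (p := reducedChi F t k R G s u)
      fun j hj => ⟨ih (by omega) hj, reducedChi_mem_coeffsIn hG hs u j⟩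
    have hPlo : (Pp F t k * lo).natDegree ≤ s * t + u * (k - 1) + (k - 1) :=
      natDegree_mul_le.trans (by have := natDegree_pp_le (F := F) (t := t) (k := k); omega)
    rw [reducedChi_succ hG hs, hsplit, mul_add, add_sub_assoc, add_modByMonic,
      modByMonic_liftP_pow_of_natDegree_lt hG (hPlo.trans_lt hu), coeff_add,
      coeff_eq_zero_of_natDegree_lt (hPlo.trans_lt hi), zero_add, liftP_eq_map,
      ← Polynomial.map_pow]
    refine modByMonic_map_mem_coeffsIn (hG.pow s) (sub_mem ?_ ?_) i
    · exact coeffsIn_mono (restrictTotalDegree_mul_inf_ID_le (a := 1) (b := s) (by omega))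
        (mul_mem_coeffsIn_mul pp_mem_coeffsIn hhigh)
    · rw [mul_comm]
      exact coeffsIn_mono (restrictTotalDegree_mul_inf_ID_le (a := s - 1) (b := 2) (by omega))
        (mul_mem_coeffsIn_mul (truncChi_mem_coeffsIn hG s u)
          fun j => Submodule.mem_inf.mpr ⟨keyPoly_mem_coeffsIn_ID _ j, keyPoly_mem_coeffsIn hG j⟩)

end KeyEquation

theorem stmt14_general (F : Type*) [Field F] (n t k : ℕ) (hn : 0 < n)
    (a : Fin n → F)
    (G : Polynomial F) (hG : G = ∏ ℓ : Fin n, (X - C (a ℓ)))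
    (R : Polynomial F) :
    ∀ s u : ℕ, 1 ≤ s → s * t + u * (k - 1) ≤ s * n - 1 →
      ∀ i : ℕ, t * s + u * (k - 1) < i →
        (chi F t k R G s u).coeff i ∈ ID F t k R G (s + 1) := by
  intro s u hs hu i hi
  have hGm : G.Monic := hG ▸ monic_prod_X_sub_C a Finset.univ
  have hGdeg : G.natDegree = n := by simp [hG]
  have hsn : s * t + u * (k - 1) < s * G.natDegree := by
    rw [hGdeg]
    have : 0 < s * n := Nat.mul_pos hs hn
    omega
  have htG : t < G.natDegree := Nat.lt_of_mul_lt_mul_left (hsn.trans_le' le_self_add)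
  rw [chi_eq_reducedChi hGm htG]
  exact coeff_reducedChi_mem_ID hGm hs u hsn (by rwa [mul_comm s t])

/-- Theorem 1, claim (11): for `s ≥ 1` and `0 ≤ u ≤ pow_s`
(the condition `u ≤ pow_s = max{u : s·t + u·(k−1) ≤ s·n − 1}` being expressed as
`s·t + u·(k−1) ≤ s·n − 1`), for every degree `i > t·s + u·(k−1)` the coefficient of
`X^i` in `χ(s,u)` lies in `I_{s+1}`. -/
theorem stmt14 (F : Type*) [Field F] (n t k : ℕ) (hn : 0 < n) (ht : 1 ≤ t) (hk : 2 ≤ k)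
    (htk : t + k - 1 ≤ n - 1)
    (a b : Fin n → F) (ha : Function.Injective a)
    (G : Polynomial F) (hG : G = ∏ ℓ : Fin n, (X - C (a ℓ)))
    (R : Polynomial F) (hRdeg : R.degree < n) (hR : ∀ ℓ, R.eval (a ℓ) = b ℓ) :
    ∀ s u : ℕ, 1 ≤ s → s * t + u * (k - 1) ≤ s * n - 1 →
      ∀ i : ℕ, t * s + u * (k - 1) < i →
        (chi F t k R G s u).coeff i ∈ ID F t k R G (s + 1) :=
  stmt14_general F n t k hn a G hG R
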